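/- Let A be a separable C*-algebra. Suppose that for every finite family x_1, ..., x_n of self-adjoint elements of A, every ε > 0, and every finite family of noncommutative *-polynomials P_1, ..., P_r in n variables, there exist a positive integer k and self-adjoint matrices A_1, ..., A_n ∈ M_k(ℂ) such that |‖P_j(x_1,...,x_n)‖ − ‖P_j(A_1,...,A_n)‖| ≤ ε for all j. Then A embeds into the quotient C*-algebra (∏_k M_{n_k}(ℂ)) / (⊕_k M_{n_k}(ℂ)) for some sequence of positive integers n_k (i.e., A is an MF algebra). -/

import Mathlib

noncomputable section

open Filter TopologicalSpace

/-- The C*-algebra `M_m(ℂ)` realized as bounded operators on `ℂ^m`. -/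
abbrev MatCStar (m : ℕ) := EuclideanSpace ℂ (Fin m) →L[ℂ] EuclideanSpace ℂ (Fin m)

/-- A sequence of matrices lying in `⊕_k M_{n_k}(ℂ)`, i.e. a null sequence. -/
def IsNullSeq {n : ℕ → ℕ} (f : ∀ k, MatCStar (n k)) : Prop :=
  Tendsto (fun k => ‖f k‖) atTop (nhds 0)

/-- `A` is an MF algebra: there is an injective `*`-homomorphism from `A` into
`∏_k M_{n_k}(ℂ) / ⊕_k M_{n_k}(ℂ)` for some sequence of positive integers `(n_k)`.
Equivalently (choosing a set-theoretic lift of such an embedding), there is a map `Φ` from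
`A` to bounded sequences of matrices which is additive, multiplicative, `ℂ`-homogeneous and
star-preserving modulo null sequences, and which maps only `0` to a null sequence. -/
def IsMF (A : Type) [NonUnitalNormedRing A] [StarRing A] [NormedSpace ℂ A] : Prop :=
  ∃ n : ℕ → ℕ, (∀ k, 0 < n k) ∧
    ∃ Φ : A → ∀ k, MatCStar (n k),
      (∀ a, ∃ C : ℝ, ∀ k, ‖Φ a k‖ ≤ C) ∧
      (∀ a b, IsNullSeq (Φ (a + b) - (Φ a + Φ b))) ∧
      (∀ a b, IsNullSeq (Φ (a * b) - Φ a * Φ b)) ∧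
      (∀ (c : ℂ) (a : A), IsNullSeq (Φ (c • a) - c • Φ a)) ∧
      (∀ a, IsNullSeq (Φ (star a) - star (Φ a))) ∧
      (∀ a, IsNullSeq (Φ a) → a = 0)

/-! Fix dense sequences `d` in `A` and `q` in `ℂ`, and split `d m = x_{2m} + i x_{2m+1}` with
`x_i` self-adjoint. At stage `N`, the hypothesis applied to `x_0, …, x_{2N+1}`, tolerance
`1/(N+1)` and the finitely many polynomials measuring `‖d m‖` and the defects
`d m'' - (d m + d m')`, `d m'' - d m d m'`, `d m'' - q s d m`, `d m'' - (d m)^*` (all indices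
`≤ N`) produces matrices `y_0, …, y_N` whose norms are within `1/(N+1)` of those of the
`d m` and whose defects exceed theirs by at most `1/(N+1)`.
Send `a ∈ A` at stage `N` to `y_m`, where `d m` is the best approximation of `a` among
`d 0, …, d N`. By continuity of the operations of `A` the defects of this map tend to `0`,
and since it is isometric in the limit, only `0` goes to a null sequence. -/

open Finset

section NearestIndex

variable {X : Type*} [PseudoMetricSpace X]

def nearestIndex (d : ℕ → X) (x : X) (N : ℕ) : ℕ :=
  ((range (N + 1)).exists_min_image (fun m => dist x (d m)) nonempty_range_add_one).choose

theorem nearestIndex_le (d : ℕ → X) (x : X) (N : ℕ) : nearestIndex d x N ≤ N :=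
  Nat.lt_succ_iff.1 <| mem_range.1
    ((range (N + 1)).exists_min_image (fun m => dist x (d m)) nonempty_range_add_one).choose_spec.1

theorem dist_nearestIndex_le (d : ℕ → X) (x : X) {m N : ℕ} (hm : m ≤ N) :
    dist x (d (nearestIndex d x N)) ≤ dist x (d m) :=
  ((range (N + 1)).exists_min_image (fun m => dist x (d m)) nonempty_range_add_one).choose_spec.2
    m (mem_range.2 (Nat.lt_succ_of_le hm))

theorem tendsto_nearestIndex {d : ℕ → X} (hd : DenseRange d) (x : X) :
    Tendsto (fun N => d (nearestIndex d x N)) atTop (nhds x) := by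
  refine Metric.tendsto_atTop.2 fun ε hε => ?_
  obtain ⟨m, hm⟩ := Metric.denseRange_iff.1 hd x ε hε
  exact ⟨m, fun N hN => by
    rw [dist_comm]
    exact (dist_nearestIndex_le d x hN).trans_lt hm⟩

end NearestIndex

section ExtendByZero

variable {B : Type*} {n : ℕ}

def extendByZero [Zero B] (w : Fin n → B) : ℕ → B :=
  fun i => if h : i < n then w ⟨i, h⟩ else 0

theorem extendByZero_of_lt [Zero B] (w : Fin n → B) {i : ℕ} (h : i < n) :
    extendByZero w i = w ⟨i, h⟩ :=
  dif_pos h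

theorem isSelfAdjoint_extendByZero [AddMonoid B] [StarAddMonoid B] {w : Fin n → B}
    (hw : ∀ i, IsSelfAdjoint (w i)) (i : ℕ) : IsSelfAdjoint (extendByZero w i) := by
  unfold extendByZero
  split
  · exact hw _
  · exact .zero B

def restrictVars (R : Type*) [CommSemiring R] (n : ℕ) :
    FreeAlgebra R ℕ →ₐ[R] FreeAlgebra R (Fin n) :=
  FreeAlgebra.lift R (extendByZero (FreeAlgebra.ι R))

theorem lift_restrictVars {R : Type*} [CommSemiring R] [Semiring B] [Algebra R B]
    (w : Fin n → B) (p : FreeAlgebra R ℕ) :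
    FreeAlgebra.lift R w (restrictVars R n p) = FreeAlgebra.lift R (extendByZero w) p := by
  suffices (FreeAlgebra.lift R w).comp (restrictVars R n) = FreeAlgebra.lift R (extendByZero w) from
    AlgHom.congr_fun this p
  refine FreeAlgebra.hom_ext (funext fun i => ?_)
  simp only [Function.comp_apply, AlgHom.coe_comp, restrictVars, FreeAlgebra.lift_ι_apply,
    extendByZero]
  split <;> simp

end ExtendByZero

section ComplexVariables

open Complex

/-- `X_{2m} + i X_{2m+1}`: a pair of self-adjoint variables encodes an arbitrary element. -/
def complexVar (m : ℕ) : FreeAlgebra ℂ ℕ :=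
  FreeAlgebra.ι ℂ (2 * m) + I • FreeAlgebra.ι ℂ (2 * m + 1)

def conjComplexVar (m : ℕ) : FreeAlgebra ℂ ℕ :=
  FreeAlgebra.ι ℂ (2 * m) - I • FreeAlgebra.ι ℂ (2 * m + 1)

variable {B : Type*} [Ring B] [Algebra ℂ B]

theorem lift_complexVar (u : ℕ → B) (m : ℕ) :
    FreeAlgebra.lift ℂ u (complexVar m) = u (2 * m) + I • u (2 * m + 1) := by
  simp [complexVar]

theorem star_lift_complexVar [StarRing B] [StarModule ℂ B] {u : ℕ → B}
    (hu : ∀ i, IsSelfAdjoint (u i)) (m : ℕ) :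
    star (FreeAlgebra.lift ℂ u (complexVar m)) = FreeAlgebra.lift ℂ u (conjComplexVar m) := by
  simp [lift_complexVar, conjComplexVar, star_smul, (hu _).star_eq, sub_eq_add_neg]

end ComplexVariables

section ReIm

variable {A : Type*} [AddCommGroup A] [Module ℂ A] [StarAddMonoid A] [StarModule ℂ A]

def reImSeq (d : ℕ → A) (i : ℕ) : A :=
  if i % 2 = 0 then realPart (d (i / 2)) else imaginaryPart (d (i / 2))

theorem isSelfAdjoint_reImSeq (d : ℕ → A) (i : ℕ) : IsSelfAdjoint (reImSeq d i) := by
  unfold reImSeq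
  split
  · exact (realPart _).2
  · exact (imaginaryPart _).2

theorem reImSeq_complexVar (d : ℕ → A) (m : ℕ) :
    reImSeq d (2 * m) + Complex.I • reImSeq d (2 * m + 1) = d m := by
  have h₁ : (2 * m + 1) % 2 = 1 := by omega
  have h₂ : (2 * m + 1) / 2 = m := by omega
  simp [reImSeq, h₁, h₂, realPart_add_I_smul_imaginaryPart]

end ReIm

section Microstates

variable {A : Type*} [NormedRing A] [StarRing A] [NormedAlgebra ℂ A]

variable (A) in
def HasMatrixNormMicrostates : Prop :=
  ∀ (n : ℕ) (x : Fin n → A), (∀ i, IsSelfAdjoint (x i)) →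
    ∀ ε : ℝ, 0 < ε → ∀ (r : ℕ) (P : Fin r → FreeAlgebra ℂ (Fin n)),
      ∃ k : ℕ, 0 < k ∧ ∃ M : Fin n → MatCStar k, (∀ i, IsSelfAdjoint (M i)) ∧
        ∀ j : Fin r, |‖FreeAlgebra.lift ℂ x (P j)‖ - ‖FreeAlgebra.lift ℂ M (P j)‖| ≤ ε

theorem HasMatrixNormMicrostates.exists_approx (h : HasMatrixNormMicrostates A) {z : ℕ → A}
    (hz : ∀ i, IsSelfAdjoint (z i)) (n : ℕ) {ε : ℝ} (hε : 0 < ε) (S : Finset (FreeAlgebra ℂ ℕ)) :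
    ∃ k, 0 < k ∧ ∃ Y : ℕ → MatCStar k, (∀ i, IsSelfAdjoint (Y i)) ∧ ∀ p ∈ S,
      |‖FreeAlgebra.lift ℂ (extendByZero fun i : Fin n => z i) p‖ - ‖FreeAlgebra.lift ℂ Y p‖|
        ≤ ε := by
  obtain ⟨k, hk, M, hM, hMP⟩ := h n (fun i => z i) (fun i => hz i) ε hε S.card
    fun j => restrictVars ℂ n (S.equivFin.symm j)
  refine ⟨k, hk, extendByZero M, isSelfAdjoint_extendByZero (B := MatCStar k) hM, fun p hp => ?_⟩
  simpa [lift_restrictVars] using hMP (S.equivFin ⟨p, hp⟩)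

end Microstates

structure IsApproxRep {A B : Type*} [NonUnitalNormedRing A] [Star A] [SMul ℂ A]
    [NonUnitalNormedRing B] [Star B] [SMul ℂ B]
    (d : ℕ → A) (q : ℕ → ℂ) (N : ℕ) (ε : ℝ) (x : ℕ → B) : Prop where
  norm : ∀ {m}, m ≤ N → |‖d m‖ - ‖x m‖| ≤ ε
  add : ∀ {m m' m''}, m ≤ N → m' ≤ N → m'' ≤ N →
    ‖x m'' - (x m + x m')‖ ≤ ‖d m'' - (d m + d m')‖ + ε
  mul : ∀ {m m' m''}, m ≤ N → m' ≤ N → m'' ≤ N →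
    ‖x m'' - x m * x m'‖ ≤ ‖d m'' - d m * d m'‖ + ε
  smul : ∀ {m s m''}, m ≤ N → s ≤ N → m'' ≤ N →
    ‖x m'' - q s • x m‖ ≤ ‖d m'' - q s • d m‖ + ε
  star : ∀ {m m''}, m ≤ N → m'' ≤ N →
    ‖x m'' - star (x m)‖ ≤ ‖d m'' - star (d m)‖ + ε

open scoped Classical in
def relationPolys (q : ℕ → ℂ) (N : ℕ) : Finset (FreeAlgebra ℂ ℕ) :=
  (range (N + 1) ×ˢ range (N + 1) ×ˢ range (N + 1)).biUnion fun ⟨m, m', m''⟩ =>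
    {complexVar m, complexVar m'' - (complexVar m + complexVar m'),
      complexVar m'' - complexVar m * complexVar m', complexVar m'' - q m' • complexVar m,
      complexVar m'' - conjComplexVar m}

open scoped Classical in
theorem forall_mem_relationPolys {q : ℕ → ℂ} {N m m' m'' : ℕ} {P : FreeAlgebra ℂ ℕ → Prop}
    (h : ∀ p ∈ relationPolys q N, P p) (hm : m ≤ N) (hm' : m' ≤ N) (hm'' : m'' ≤ N) :
    P (complexVar m) ∧ P (complexVar m'' - (complexVar m + complexVar m')) ∧
      P (complexVar m'' - complexVar m * complexVar m') ∧
      P (complexVar m'' - q m' • complexVar m) ∧ P (complexVar m'' - conjComplexVar m) := by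
  have hmem : (m, m', m'') ∈ range (N + 1) ×ˢ range (N + 1) ×ˢ range (N + 1) := by
    simp [hm, hm', hm'']
  refine ⟨h _ ?_, h _ ?_, h _ ?_, h _ ?_, h _ ?_⟩ <;> exact mem_biUnion.2 ⟨_, hmem, by simp⟩

theorem isApproxRep_of_forall_mem_relationPolys {A B : Type*}
    [NormedRing A] [StarRing A] [NormedAlgebra ℂ A] [StarModule ℂ A]
    [NormedRing B] [StarRing B] [NormedAlgebra ℂ B] [StarModule ℂ B]
    {d : ℕ → A} {q : ℕ → ℂ} {N : ℕ} {ε : ℝ} {Z : ℕ → A} {Y : ℕ → B}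
    (hZ : ∀ i, IsSelfAdjoint (Z i)) (hY : ∀ i, IsSelfAdjoint (Y i))
    (hZd : ∀ m ≤ N, FreeAlgebra.lift ℂ Z (complexVar m) = d m)
    (h : ∀ p ∈ relationPolys q N,
      |‖FreeAlgebra.lift ℂ Z p‖ - ‖FreeAlgebra.lift ℂ Y p‖| ≤ ε) :
    IsApproxRep d q N ε fun m => FreeAlgebra.lift ℂ Y (complexVar m) := by
  have key : ∀ p ∈ relationPolys q N, ‖FreeAlgebra.lift ℂ Y p‖ ≤ ‖FreeAlgebra.lift ℂ Z p‖ + ε :=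
    fun p hp => by linarith [(abs_sub_le_iff.1 (h p hp)).2]
  have hZd' : ∀ m ≤ N, FreeAlgebra.lift ℂ Z (conjComplexVar m) = star (d m) := fun m hm => by
    rw [← star_lift_complexVar hZ, hZd m hm]
  refine ⟨fun hm => ?_, fun hm hm' hm'' => ?_, fun hm hm' hm'' => ?_, fun hm hs hm'' => ?_,
    fun hm hm'' => ?_⟩
  · simpa [hZd _ hm] using (forall_mem_relationPolys h hm hm hm).1
  · simpa [hZd _ hm, hZd _ hm', hZd _ hm''] using (forall_mem_relationPolys key hm hm' hm'').2.1
  · simpa [hZd _ hm, hZd _ hm', hZd _ hm''] using (forall_mem_relationPolys key hm hm' hm'').2.2.1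
  · simpa [hZd _ hm, hZd _ hm''] using (forall_mem_relationPolys key hm hs hm'').2.2.2.1
  · simpa [hZd _ hm, hZd' _ hm, hZd _ hm'', ← star_lift_complexVar hY] using
      (forall_mem_relationPolys key hm hm hm'').2.2.2.2


structure MatrixModel {A : Type*} [NonUnitalNormedRing A] [Star A] [SMul ℂ A]
    (d : ℕ → A) (q : ℕ → ℂ) where
  dim : ℕ → ℕ
  dim_pos : ∀ N, 0 < dim N
  mat : ∀ N, ℕ → MatCStar (dim N)
  isApproxRep : ∀ N, IsApproxRep d q N (1 / ((N : ℝ) + 1)) (mat N)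

theorem HasMatrixNormMicrostates.nonempty_matrixModel {A : Type*} [NormedRing A] [StarRing A]
    [NormedAlgebra ℂ A] [StarModule ℂ A] (h : HasMatrixNormMicrostates A) (d : ℕ → A)
    (q : ℕ → ℂ) : Nonempty (MatrixModel d q) := by
  choose k hk Y hY happrox using fun N : ℕ =>
    h.exists_approx (isSelfAdjoint_reImSeq d) (2 * N + 2) Nat.one_div_pos_of_nat
      (relationPolys q N)
  have hd : ∀ N, ∀ m ≤ N,
      FreeAlgebra.lift ℂ (extendByZero fun i : Fin (2 * N + 2) => reImSeq d i) (complexVar m) =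
        d m := fun N m hm => by
    rw [lift_complexVar, extendByZero_of_lt _ (by omega), extendByZero_of_lt _ (by omega),
      reImSeq_complexVar]
  exact ⟨⟨k, hk, fun N m => FreeAlgebra.lift ℂ (Y N) (complexVar m), fun N =>
    isApproxRep_of_forall_mem_relationPolys (isSelfAdjoint_extendByZero fun _ =>
      isSelfAdjoint_reImSeq d _) (hY N) (hd N) (happrox N)⟩⟩

theorem IsNullSeq.of_norm_le {n : ℕ → ℕ} {f : ∀ k, MatCStar (n k)} {g : ℕ → ℝ}
    (hfg : ∀ k, ‖f k‖ ≤ g k) (hg : Tendsto g atTop (nhds 0)) : IsNullSeq f :=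
  squeeze_zero (fun _ => norm_nonneg _) hfg hg

theorem IsApproxRep.norm_sub_smul_le {A B : Type*} [NonUnitalNormedRing A] [Star A]
    [NormedSpace ℂ A] [NonUnitalNormedRing B] [Star B] [NormedSpace ℂ B]
    {d : ℕ → A} {q : ℕ → ℂ} {N : ℕ} {ε : ℝ} {x : ℕ → B} (hx : IsApproxRep d q N ε x) (c : ℂ)
    {m s m'' : ℕ} (hm : m ≤ N) (hs : s ≤ N) (hm'' : m'' ≤ N) :
    ‖x m'' - c • x m‖ ≤ ‖d m'' - q s • d m‖ + ε + ‖q s - c‖ * (‖d m‖ + ε) := by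
  have hxm : ‖x m‖ ≤ ‖d m‖ + ε := by linarith [(abs_sub_le_iff.1 (hx.norm hm)).2]
  calc ‖x m'' - c • x m‖ = ‖(x m'' - q s • x m) + (q s - c) • x m‖ := by
        rw [sub_smul]; abel_nf
    _ ≤ ‖x m'' - q s • x m‖ + ‖q s - c‖ * ‖x m‖ := by
        grw [norm_add_le, norm_smul]
    _ ≤ _ := by grw [hx.smul hm hs hm'', hxm]

namespace MatrixModel

variable {A : Type*} [NonUnitalNormedRing A] [StarRing A] [NormedSpace ℂ A]
  {d : ℕ → A} {q : ℕ → ℂ} (M : MatrixModel d q)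

def embed (a : A) (N : ℕ) : MatCStar (M.dim N) := M.mat N (nearestIndex d a N)

local notation "κ" => nearestIndex d

theorem norm_embed_le (a : A) (N : ℕ) : ‖M.embed a N‖ ≤ ‖d (κ a N)‖ + 1 / ((N : ℝ) + 1) := by
  unfold embed
  linarith [(abs_sub_le_iff.1 ((M.isApproxRep N).norm (nearestIndex_le d a N))).2]

theorem norm_le_norm_embed (a : A) (N : ℕ) :
    ‖d (κ a N)‖ ≤ ‖M.embed a N‖ + 1 / ((N : ℝ) + 1) := by
  unfold embed
  linarith [(abs_sub_le_iff.1 ((M.isApproxRep N).norm (nearestIndex_le d a N))).1]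

theorem bddAbove_norm_embed (hd : DenseRange d) (a : A) : ∃ C : ℝ, ∀ N, ‖M.embed a N‖ ≤ C := by
  obtain ⟨C, hC⟩ := ((tendsto_nearestIndex hd a).norm.add
    tendsto_one_div_add_atTop_nhds_zero_nat).bddAbove_range
  exact ⟨C, fun N => (M.norm_embed_le a N).trans (hC ⟨N, rfl⟩)⟩

theorem isNullSeq_embed_add (hd : DenseRange d) (a b : A) :
    IsNullSeq (M.embed (a + b) - (M.embed a + M.embed b)) := by
  refine .of_norm_le (fun N => (M.isApproxRep N).add (nearestIndex_le d a N)
    (nearestIndex_le d b N) (nearestIndex_le d (a + b) N)) ?_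
  simpa using (((tendsto_nearestIndex hd (a + b)).sub ((tendsto_nearestIndex hd a).add
    (tendsto_nearestIndex hd b))).norm.add tendsto_one_div_add_atTop_nhds_zero_nat)

theorem isNullSeq_embed_mul (hd : DenseRange d) (a b : A) :
    IsNullSeq (M.embed (a * b) - M.embed a * M.embed b) := by
  refine .of_norm_le (fun N => (M.isApproxRep N).mul (nearestIndex_le d a N)
    (nearestIndex_le d b N) (nearestIndex_le d (a * b) N)) ?_
  simpa using (((tendsto_nearestIndex hd (a * b)).sub ((tendsto_nearestIndex hd a).mul
    (tendsto_nearestIndex hd b))).norm.add tendsto_one_div_add_atTop_nhds_zero_nat)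

theorem isNullSeq_embed_star [ContinuousStar A] (hd : DenseRange d) (a : A) :
    IsNullSeq (M.embed (star a) - star (M.embed a)) := by
  refine .of_norm_le (fun N => (M.isApproxRep N).star (nearestIndex_le d a N)
    (nearestIndex_le d (star a) N)) ?_
  simpa using (((tendsto_nearestIndex hd (star a)).sub
    (tendsto_nearestIndex hd a).star).norm.add tendsto_one_div_add_atTop_nhds_zero_nat)

theorem isNullSeq_embed_smul (hd : DenseRange d) (hq : DenseRange q) (c : ℂ) (a : A) :
    IsNullSeq (M.embed (c • a) - c • M.embed a) := by
  have hε := tendsto_one_div_add_atTop_nhds_zero_nat (𝕜 := ℝ)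
  have hda := tendsto_nearestIndex hd a
  have hqc := tendsto_nearestIndex hq c
  refine .of_norm_le (fun N => (M.isApproxRep N).norm_sub_smul_le c (nearestIndex_le d a N)
    (nearestIndex_le q c N) (nearestIndex_le d (c • a) N)) ?_
  simpa using (((tendsto_nearestIndex hd (c • a)).sub (hqc.smul hda)).norm.add hε).add
    ((hqc.sub (tendsto_const_nhds (x := c))).norm.mul (hda.norm.add hε))

theorem eq_zero_of_isNullSeq_embed (hd : DenseRange d) {a : A} (ha : IsNullSeq (M.embed a)) :
    a = 0 := by
  refine norm_le_zero_iff.1 (le_of_tendsto_of_tendsto (tendsto_nearestIndex hd a).norm ?_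
    (.of_forall (M.norm_le_norm_embed a)))
  simpa using ha.add tendsto_one_div_add_atTop_nhds_zero_nat

end MatrixModel

theorem MatrixModel.isMF {A : Type} [NonUnitalNormedRing A] [StarRing A] [NormedSpace ℂ A]
    [ContinuousStar A] {d : ℕ → A} {q : ℕ → ℂ} (M : MatrixModel d q) (hd : DenseRange d)
    (hq : DenseRange q) : IsMF A :=
  ⟨M.dim, M.dim_pos, M.embed, M.bddAbove_norm_embed hd, M.isNullSeq_embed_add hd,
    M.isNullSeq_embed_mul hd, M.isNullSeq_embed_smul hd hq, M.isNullSeq_embed_star hd,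
    fun _ => M.eq_zero_of_isNullSeq_embed hd⟩

/-- If a (unital) separable C*-algebra `A` satisfies the matricial norm-microstate
condition — for all self-adjoint `x_1, …, x_n ∈ A`, `ε > 0` and noncommutative polynomials
`P_1, …, P_r ∈ ℂ⟨X_1, …, X_n⟩` there are `k` and self-adjoint `A_1, …, A_n ∈ M_k(ℂ)` with
`|‖P_j(x)‖ − ‖P_j(A)‖| ≤ ε` for all `j` — then `A` is an MF algebra, i.e. `A` embeds into
`∏_k M_{n_k}(ℂ) / ⊕_k M_{n_k}(ℂ)` for some sequence `(n_k)`. -/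
theorem isMF_of_matrix_norm_approximation
    (A : Type) [CStarAlgebra A] [SeparableSpace A]
    (h : ∀ (n : ℕ) (x : Fin n → A), (∀ i, IsSelfAdjoint (x i)) →
      ∀ ε : ℝ, 0 < ε → ∀ (r : ℕ) (P : Fin r → FreeAlgebra ℂ (Fin n)),
        ∃ k : ℕ, 0 < k ∧ ∃ M : Fin n → MatCStar k, (∀ i, IsSelfAdjoint (M i)) ∧
          ∀ j : Fin r,
            |‖FreeAlgebra.lift ℂ x (P j)‖ - ‖FreeAlgebra.lift ℂ M (P j)‖| ≤ ε) :
    IsMF A :=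
  (HasMatrixNormMicrostates.nonempty_matrixModel h (denseSeq A) (denseSeq ℂ)).some.isMF
    (denseRange_denseSeq A) (denseRange_denseSeq ℂ)
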